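/- Consider a two-transmitter MAC code ensemble with M₁ and M₂ codewords drawn independently from exchangeable distributions P_{X₁(1)...X₁(M₁)} and P_{X₂(1)...X₂(M₂)}. Under ML decoding, the ensemble-average error probability ε satisfies ε ≤ E[min{1, V₁+V₂+V₁₂}], where V₁ = (M₁−1)·Pr[i(X̄₁;Y|X₂) ≥ i(X₁;Y|X₂) | X₁,X₂,Y], V₂ = (M₂−1)·Pr[i(X̄₂;Y|X₁) ≥ i(X₂;Y|X₁) | X₁,X₂,Y], and V₁₂ = (M₁−1)(M₂−1)·Pr[i(X̄₁,X̄₂;Y) ≥ i(X₁,X₂;Y) | X₁,X₂,Y]. -/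

import Mathlib

open scoped BigOperators Classical

noncomputable section

/-- The set of ML-optimal message pairs for MAC codebooks `c1, c2` and output `y`. -/
def mlSetPair {A1 A2 B : Type*} {M1 M2 : ℕ} (W : A1 → A2 → B → ℝ)
    (c1 : Fin M1 → A1) (c2 : Fin M2 → A2) (y : B) : Finset (Fin M1 × Fin M2) :=
  Finset.univ.filter (fun ij => ∀ kl : Fin M1 × Fin M2,
    W (c1 kl.1) (c2 kl.2) y ≤ W (c1 ij.1) (c2 ij.2) y)

/-- Average error probability of the MAC codebook pair `(c1, c2)` under
maximum likelihood decoding with ties broken uniformly at random. -/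
def mlErrorMac {A1 A2 B : Type*} [Fintype B] {M1 M2 : ℕ} (W : A1 → A2 → B → ℝ)
    (c1 : Fin M1 → A1) (c2 : Fin M2 → A2) : ℝ :=
  ((M1 * M2 : ℕ) : ℝ)⁻¹ * ∑ ij : Fin M1 × Fin M2, ∑ y : B,
    W (c1 ij.1) (c2 ij.2) y *
      (1 - if ij ∈ mlSetPair W c1 c2 y
        then ((mlSetPair W c1 c2 y).card : ℝ)⁻¹ else 0)

/-!
Exchangeability makes the ensemble invariant under permuting the codewords of either codebook,
so the average error probability equals the error probability of the message pair `(0, 0)`.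
Given the output, that pair is decoded wrongly only if some other pair is at least as likely,
so the conditional error is at most `min 1 N`, where `N` counts such rivals: pairs that differ
in the first message only, in the second only, or in both. Fixing the transmitted codewords,
`E[min 1 N] ≤ min 1 E[N]`, and by exchangeability each of the three expected counts is
`M₁ - 1`, `M₂ - 1` or `(M₁ - 1)(M₂ - 1)` times a probability under the joint law of two
codewords. Finally, each information density is `log (W / q)` with `q > 0` independent of the
rival, so a rival at least as likely also has an information density at least as large.
-/

open Finset

section Exchangeable

variable {X : Type*} [Fintype X] {M : ℕ}

def IsExchangeable (P : (Fin M → X) → ℝ) : Prop :=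
  ∀ (k : ℕ) (σ τ : Fin k → Fin M), Function.Injective σ → Function.Injective τ →
    ∀ v : Fin k → X,
      (∑ c ∈ univ.filter (fun c : Fin M → X => ∀ i, c (σ i) = v i), P c) =
      ∑ c ∈ univ.filter (fun c : Fin M → X => ∀ i, c (τ i) = v i), P c

def fiber (i : Fin M) (a : X) : Finset (Fin M → X) :=
  univ.filter (fun c => c i = a)

def pairMarginal (P : (Fin M → X) → ℝ) (i j : Fin M) (a b : X) : ℝ :=
  ∑ c ∈ univ.filter (fun c : Fin M → X => c i = a ∧ c j = b), P c

variable {P : (Fin M → X) → ℝ}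

theorem IsExchangeable.comp_perm (hP : IsExchangeable P) (π : Equiv.Perm (Fin M))
    (v : Fin M → X) : P (v ∘ π) = P v := by
  have h := hP M id π.symm Function.injective_id π.symm.injective v
  have hid : univ.filter (fun c : Fin M → X => ∀ i, c (id i) = v i) = {v} := by
    ext c; simp [funext_iff]
  have hπ : univ.filter (fun c : Fin M → X => ∀ i, c (π.symm i) = v i) = {v ∘ π} := by
    ext c
    simp only [mem_filter, mem_univ, true_and, mem_singleton]
    exact ⟨fun h => funext fun j => by simpa using h (π j), by rintro rfl i; simp⟩
  rw [hid, hπ, sum_singleton, sum_singleton] at h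
  exact h.symm

theorem IsExchangeable.sum_mul_comp_perm (hP : IsExchangeable P) (π : Equiv.Perm (Fin M))
    (F : (Fin M → X) → ℝ) : ∑ c, P c * F (c ∘ π) = ∑ c, P c * F c := by
  conv_rhs => rw [← (π.symm.arrowCongr (Equiv.refl X)).sum_comp]
  exact sum_congr rfl fun c _ => by rw [← hP.comp_perm π c]; rfl

theorem IsExchangeable.pairMarginal_eq (hP : IsExchangeable P) {i j i' j' : Fin M}
    (h : i ≠ j) (h' : i' ≠ j') : pairMarginal P i j = pairMarginal P i' j' := by
  have hinj : ∀ {u w : Fin M}, u ≠ w → Function.Injective ![u, w] := fun huw x z hxz => by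
    fin_cases x <;> fin_cases z <;> simp_all [eq_comm]
  have hpair : ∀ (u w : Fin M) (a b : X),
      univ.filter (fun c : Fin M → X => ∀ t, c (![u, w] t) = ![a, b] t) =
        univ.filter (fun c : Fin M → X => c u = a ∧ c w = b) := by
    intro u w a b; ext c; simp [Fin.forall_fin_two]
  funext a b
  simpa only [pairMarginal, hpair] using hP 2 _ _ (hinj h) (hinj h') ![a, b]

theorem pairMarginal_nonneg (hP : ∀ c, 0 ≤ P c) (i j : Fin M) (a b : X) :
    0 ≤ pairMarginal P i j a b :=
  sum_nonneg fun c _ => hP c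

theorem sum_fiber_mul_apply (P : (Fin M → X) → ℝ) (i k : Fin M) (a : X) (g : X → ℝ) :
    ∑ c ∈ fiber i a, P c * g (c k) =
      ∑ b, pairMarginal P i k a b * g b := by
  rw [← sum_fiberwise _ (fun c => c k)]
  refine sum_congr rfl fun b _ => ?_
  rw [pairMarginal, sum_mul, fiber, filter_filter]
  exact sum_congr rfl fun c hc => by rw [(mem_filter.mp hc).2.2]

theorem sum_fiber_eq_sum_pairMarginal (P : (Fin M → X) → ℝ) (i k : Fin M) (a : X) :
    ∑ c ∈ fiber i a, P c = ∑ b, pairMarginal P i k a b := by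
  simpa using sum_fiber_mul_apply P i k a 1

theorem IsExchangeable.sum_fiber_mul_sum_erase (hP : IsExchangeable P) {i i' : Fin M}
    (hi : i ≠ i') (a : X) (g : X → ℝ) :
    ∑ c ∈ fiber i a, P c * ∑ k ∈ univ.erase i, g (c k) =
      (M - 1 : ℝ) * ∑ b, pairMarginal P i i' a b * g b := by
  have hk : ∀ k ∈ univ.erase i,
      ∑ c ∈ fiber i a, P c * g (c k) = ∑ b, pairMarginal P i i' a b * g b := fun k hk => by
    rw [sum_fiber_mul_apply, hP.pairMarginal_eq (ne_of_mem_erase hk).symm hi]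
  calc _ = ∑ k ∈ univ.erase i, ∑ c ∈ fiber i a, P c * g (c k) := by
        simp only [mul_sum]; exact sum_comm
    _ = _ := by
      rw [sum_congr rfl hk, sum_const, card_erase_of_mem (mem_univ i), card_univ,
        Fintype.card_fin, nsmul_eq_mul, Nat.cast_pred (Fin.pos i)]

end Exchangeable

theorem sum_erase_prod {α β G : Type*} [Fintype α] [Fintype β] [DecidableEq α] [DecidableEq β]
    [AddCommGroup G] (f : α × β → G) (i : α) (j : β) :
    ∑ z ∈ univ.erase (i, j), f z =
      ∑ k ∈ univ.erase i, f (k, j) + ∑ l ∈ univ.erase j, f (i, l) +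
        ∑ k ∈ univ.erase i, ∑ l ∈ univ.erase j, f (k, l) := by
  have hrow : ∀ k, ∑ l, f (k, l) = f (k, j) + ∑ l ∈ univ.erase j, f (k, l) := fun k =>
    (add_sum_erase _ _ (mem_univ j)).symm
  have htotal := add_sum_erase univ f (mem_univ (i, j))
  rw [Fintype.sum_prod_type, ← add_sum_erase _ _ (mem_univ i)] at htotal
  simp only [hrow, sum_add_distrib] at htotal
  apply add_left_cancel (a := f (i, j))
  rw [htotal]
  abel

theorem one_sub_tieBreak_le {ι : Type*} [Fintype ι] [DecidableEq ι] (f : ι → ℝ) (x : ι) :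
    1 - (if x ∈ univ.filter (fun z => ∀ w, f w ≤ f z)
      then ((univ.filter (fun z => ∀ w, f w ≤ f z)).card : ℝ)⁻¹ else 0) ≤
      min 1 (∑ z ∈ univ.erase x, if f x ≤ f z then 1 else 0) := by
  by_cases hrival : ∃ z ∈ univ.erase x, f x ≤ f z
  · obtain ⟨z, hz, hxz⟩ := hrival
    have hcount : (1 : ℝ) ≤ ∑ z ∈ univ.erase x, if f x ≤ f z then 1 else 0 := by
      simpa [hxz] using single_le_sum (f := fun z => if f x ≤ f z then (1 : ℝ) else 0)
        (fun _ _ => by positivity) hz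
    rw [min_eq_left hcount, sub_le_self_iff]
    positivity
  · push Not at hrival
    have hunique : univ.filter (fun z => ∀ w, f w ≤ f z) = {x} := by
      refine eq_singleton_iff_unique_mem.mpr ⟨?_, fun z hz => ?_⟩
      · simp only [mem_filter, mem_univ, true_and]
        intro w
        by_cases hw : w = x
        · rw [hw]
        · exact (hrival w (mem_erase.mpr ⟨hw, mem_univ w⟩)).le
      · by_contra hzx
        exact (hrival z (mem_erase.mpr ⟨hzx, mem_univ z⟩)).not_ge ((mem_filter.mp hz).2 x)
    simp only [hunique, mem_singleton, if_true, card_singleton, Nat.cast_one, inv_one, sub_self]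
    exact le_min zero_le_one (sum_nonneg fun _ _ => by positivity)

theorem sum_sum_eq_sum_sum_fiberwise {α1 α2 β1 β2 R : Type*} [Fintype α1] [Fintype α2]
    [Fintype β1] [Fintype β2] [AddCommMonoid R] (f1 : α1 → β1) (f2 : α2 → β2)
    (H : α1 → α2 → β1 → β2 → R) :
    ∑ c1, ∑ c2, H c1 c2 (f1 c1) (f2 c2) =
      ∑ a1, ∑ a2, ∑ c1 ∈ univ.filter (fun c => f1 c = a1),
        ∑ c2 ∈ univ.filter (fun c => f2 c = a2), H c1 c2 a1 a2 := by
  rw [← sum_fiberwise univ f1]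
  refine sum_congr rfl fun a1 _ => ?_
  refine (sum_congr rfl fun c1 hc1 => ?_).trans sum_comm
  rw [(mem_filter.mp hc1).2, ← sum_fiberwise univ f2]
  refine sum_congr rfl fun a2 _ => sum_congr rfl fun c2 hc2 => ?_
  rw [(mem_filter.mp hc2).2]

theorem sum_sum_mul_min_one_le {α1 α2 : Type*} (s1 : Finset α1) (s2 : Finset α2)
    (w R : α1 → α2 → ℝ) (hw : ∀ c1 c2, 0 ≤ w c1 c2) :
    ∑ c1 ∈ s1, ∑ c2 ∈ s2, w c1 c2 * min 1 (R c1 c2) ≤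
      min (∑ c1 ∈ s1, ∑ c2 ∈ s2, w c1 c2)
        (∑ c1 ∈ s1, ∑ c2 ∈ s2, w c1 c2 * R c1 c2) :=
  le_min
    (sum_le_sum fun c1 _ => sum_le_sum fun c2 _ =>
      mul_le_of_le_one_right (hw c1 c2) (min_le_left _ _))
    (sum_le_sum fun c1 _ => sum_le_sum fun c2 _ =>
      mul_le_mul_of_nonneg_left (min_le_right _ _) (hw c1 c2))

theorem mul_min_le_mul_min_one_div {w p1 p2 m1 m2 t1 t2 t12 : ℝ} (hw : 0 ≤ w) (hp1 : 0 ≤ p1)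
    (hp2 : 0 ≤ p2) :
    w * min (p1 * p2) (m1 * t1 * p2 + m2 * t2 * p1 + m1 * m2 * t12) ≤
      p1 * p2 * w * min 1 (m1 * (t1 / p1) + m2 * (t2 / p2) + m1 * m2 * (t12 / (p1 * p2))) := by
  rcases hp1.eq_or_lt with rfl | hp1
  · simpa using mul_nonpos_of_nonneg_of_nonpos hw (min_le_left 0 _)
  rcases hp2.eq_or_lt with rfl | hp2
  · simpa using mul_nonpos_of_nonneg_of_nonpos hw (min_le_left 0 _)
  have hjoint : p1 * p2 * (m1 * (t1 / p1) + m2 * (t2 / p2) + m1 * m2 * (t12 / (p1 * p2))) =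
      m1 * t1 * p2 + m2 * t2 * p1 + m1 * m2 * t12 := by
    field_simp
  refine le_of_eq ?_
  calc _ = w * min (p1 * p2 * 1)
        (p1 * p2 * (m1 * (t1 / p1) + m2 * (t2 / p2) + m1 * m2 * (t12 / (p1 * p2)))) := by
        rw [mul_one, hjoint]
    _ = _ := by rw [← mul_min_of_nonneg _ _ (by positivity)]; ring

theorem mul_min_one_le_mul_min_one {p1 p2 w m1 m2 t1 t2 t12 s1 s2 s12 : ℝ} (hp1 : 0 ≤ p1)
    (hp2 : 0 ≤ p2) (hw : 0 ≤ w) (hm1 : 0 ≤ m1) (hm2 : 0 ≤ m2)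
    (h : 0 < p1 → 0 < p2 → 0 < w → t1 ≤ s1 ∧ t2 ≤ s2 ∧ t12 ≤ s12) :
    p1 * p2 * w * min 1 (m1 * (t1 / p1) + m2 * (t2 / p2) + m1 * m2 * (t12 / (p1 * p2))) ≤
      p1 * p2 * w * min 1 (m1 * (s1 / p1) + m2 * (s2 / p2) + m1 * m2 * (s12 / (p1 * p2))) := by
  rcases hp1.eq_or_lt with rfl | hp1
  · simp
  rcases hp2.eq_or_lt with rfl | hp2
  · simp
  rcases hw.eq_or_lt with rfl | hw
  · simp
  obtain ⟨h1, h2, h12⟩ := h hp1 hp2 hw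
  gcongr

theorem ite_le_ite_of_imp {p q : Prop} [Decidable p] [Decidable q] {a : ℝ} (ha : 0 ≤ a)
    (h : p → q) : (if p then a else 0) ≤ if q then a else 0 := by
  split_ifs <;> simp_all

theorem log_div_le_log_div {u v d : ℝ} (hu : 0 < u) (hd : 0 < d) (h : u ≤ v) :
    Real.log (u / d) ≤ Real.log (v / d) :=
  Real.log_le_log (div_pos hu hd) (div_le_div_of_nonneg_right h hd.le)

section MAC

variable {X1 X2 Y : Type*} {M1 M2 : ℕ}

theorem mlSetPair_comp_perm (W : X1 → X2 → Y → ℝ) (c1 : Fin M1 → X1) (c2 : Fin M2 → X2)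
    (y : Y) (π1 : Equiv.Perm (Fin M1)) (π2 : Equiv.Perm (Fin M2)) :
    mlSetPair W (c1 ∘ π1) (c2 ∘ π2) y =
      (mlSetPair W c1 c2 y).map (π1.prodCongr π2).symm.toEmbedding := by
  ext kl
  rw [mem_map_equiv]
  simp only [mlSetPair, mem_filter, mem_univ, true_and, Function.comp_apply]
  exact (π1.prodCongr π2).forall_congr_right (q := fun w => W (c1 w.1) (c2 w.2) y ≤ _)

-- `a1`, `a2` stand for the transmitted codewords `c1 i`, `c2 j`, so that they can be frozen
-- when averaging over the remaining codewords.
def rivalCount (s : X1 → X2 → ℝ) (c1 : Fin M1 → X1) (c2 : Fin M2 → X2) (i : Fin M1)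
    (j : Fin M2) (a1 : X1) (a2 : X2) : ℝ :=
  (∑ k ∈ univ.erase i, if s a1 a2 ≤ s (c1 k) a2 then 1 else 0) +
    (∑ l ∈ univ.erase j, if s a1 a2 ≤ s a1 (c2 l) then 1 else 0) +
    ∑ k ∈ univ.erase i, ∑ l ∈ univ.erase j, if s a1 a2 ≤ s (c1 k) (c2 l) then 1 else 0

variable [Fintype Y]

def mlErrorAt (W : X1 → X2 → Y → ℝ) (c1 : Fin M1 → X1) (c2 : Fin M2 → X2)
    (ij : Fin M1 × Fin M2) : ℝ :=
  ∑ y, W (c1 ij.1) (c2 ij.2) y *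
    (1 - if ij ∈ mlSetPair W c1 c2 y then ((mlSetPair W c1 c2 y).card : ℝ)⁻¹ else 0)

theorem mlErrorAt_le (W : X1 → X2 → Y → ℝ) (hW : ∀ x1 x2 y, 0 ≤ W x1 x2 y)
    (c1 : Fin M1 → X1) (c2 : Fin M2 → X2) (i : Fin M1) (j : Fin M2) :
    mlErrorAt W c1 c2 (i, j) ≤
      ∑ y, W (c1 i) (c2 j) y * min 1 (rivalCount (W · · y) c1 c2 i j (c1 i) (c2 j)) := by
  refine sum_le_sum fun y _ => mul_le_mul_of_nonneg_left ?_ (hW _ _ _)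
  have h := one_sub_tieBreak_le (fun z : Fin M1 × Fin M2 => W (c1 z.1) (c2 z.2) y) (i, j)
  rwa [sum_erase_prod] at h

theorem mlErrorAt_comp_perm (W : X1 → X2 → Y → ℝ) (c1 : Fin M1 → X1) (c2 : Fin M2 → X2)
    (π1 : Equiv.Perm (Fin M1)) (π2 : Equiv.Perm (Fin M2)) (ij : Fin M1 × Fin M2) :
    mlErrorAt W (c1 ∘ π1) (c2 ∘ π2) ij = mlErrorAt W c1 c2 (π1 ij.1, π2 ij.2) := by
  simp only [mlErrorAt, mlSetPair_comp_perm, card_map, mem_map_equiv]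
  rfl

end MAC

section Ensemble

variable {X1 X2 Y : Type*} [Fintype X1] [Fintype X2] [Fintype Y] {M1 M2 : ℕ}
  {P1 : (Fin M1 → X1) → ℝ} {P2 : (Fin M2 → X2) → ℝ}

theorem sum_mul_mlErrorAt_eq (hP1 : IsExchangeable P1) (hP2 : IsExchangeable P2)
    (W : X1 → X2 → Y → ℝ) (ij kl : Fin M1 × Fin M2) :
    ∑ c1, ∑ c2, P1 c1 * P2 c2 * mlErrorAt W c1 c2 ij =
      ∑ c1, ∑ c2, P1 c1 * P2 c2 * mlErrorAt W c1 c2 kl := by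
  set π1 := Equiv.swap kl.1 ij.1
  set π2 := Equiv.swap kl.2 ij.2
  have hπ : ∀ c1 c2, mlErrorAt W (c1 ∘ π1) (c2 ∘ π2) kl = mlErrorAt W c1 c2 ij := by
    intro c1 c2
    rw [mlErrorAt_comp_perm, Equiv.swap_apply_left, Equiv.swap_apply_left]
  simp only [mul_assoc, ← mul_sum, ← hπ]
  rw [hP1.sum_mul_comp_perm π1 (fun c1 => ∑ c2, P2 c2 * mlErrorAt W c1 (c2 ∘ π2) kl)]
  exact sum_congr rfl fun c1 _ => by rw [hP2.sum_mul_comp_perm π2 (mlErrorAt W c1 · kl)]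

theorem sum_mul_mlErrorMac_eq (hP1 : IsExchangeable P1) (hP2 : IsExchangeable P2)
    (W : X1 → X2 → Y → ℝ) (ij : Fin M1 × Fin M2) :
    ∑ c1, ∑ c2, P1 c1 * P2 c2 * mlErrorMac W c1 c2 =
      ∑ c1, ∑ c2, P1 c1 * P2 c2 * mlErrorAt W c1 c2 ij := by
  have hcard : (M1 : ℝ) * M2 ≠ 0 := by
    have := ij.1.pos; have := ij.2.pos; positivity
  have hmac : ∀ c1 c2, P1 c1 * P2 c2 * mlErrorMac W c1 c2 =
      ((M1 * M2 : ℕ) : ℝ)⁻¹ * ∑ kl, P1 c1 * P2 c2 * mlErrorAt W c1 c2 kl := fun c1 c2 => by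
    rw [← mul_sum]; exact mul_left_comm _ _ _
  simp only [hmac, ← mul_sum (a := ((M1 * M2 : ℕ) : ℝ)⁻¹)]
  rw [sum_congr rfl fun c1 _ => sum_comm, sum_comm,
    sum_congr rfl fun kl _ => sum_mul_mlErrorAt_eq hP1 hP2 W kl ij, sum_const, card_univ,
    Fintype.card_prod, Fintype.card_fin, Fintype.card_fin, nsmul_eq_mul, ← mul_assoc,
    Nat.cast_mul, inv_mul_cancel₀ hcard, one_mul]

theorem sum_fiber_mul_sum_erase_sum_erase (hP1 : IsExchangeable P1) (hP2 : IsExchangeable P2)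
    {i i' : Fin M1} (hi : i ≠ i') {j j' : Fin M2} (hj : j ≠ j') (a1 : X1) (a2 : X2)
    (h : X1 → X2 → ℝ) :
    ∑ c1 ∈ fiber i a1, ∑ c2 ∈ fiber j a2,
        P1 c1 * P2 c2 * ∑ k ∈ univ.erase i, ∑ l ∈ univ.erase j, h (c1 k) (c2 l) =
      (M1 - 1 : ℝ) * (M2 - 1 : ℝ) *
        ∑ b1, ∑ b2, pairMarginal P1 i i' a1 b1 * pairMarginal P2 j j' a2 b2 * h b1 b2 := by
  calc _ = ∑ c1 ∈ fiber i a1, P1 c1 * ∑ k ∈ univ.erase i,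
        ∑ c2 ∈ fiber j a2, P2 c2 * ∑ l ∈ univ.erase j, h (c1 k) (c2 l) := by
        simp only [mul_sum, mul_assoc]
        exact sum_congr rfl fun _ _ => sum_comm
    _ = ∑ c1 ∈ fiber i a1, P1 c1 * ∑ k ∈ univ.erase i,
        (M2 - 1 : ℝ) * ∑ b2, pairMarginal P2 j j' a2 b2 * h (c1 k) b2 :=
        sum_congr rfl fun c1 _ => congrArg (P1 c1 * ·) (sum_congr rfl fun k _ =>
          hP2.sum_fiber_mul_sum_erase hj a2 (h (c1 k)))
    _ = (M2 - 1 : ℝ) * ∑ c1 ∈ fiber i a1,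
        P1 c1 * ∑ k ∈ univ.erase i, ∑ b2, pairMarginal P2 j j' a2 b2 * h (c1 k) b2 := by
        rw [mul_sum]
        exact sum_congr rfl fun _ _ => by rw [← mul_sum]; exact mul_left_comm _ _ _
    _ = _ := by
        rw [hP1.sum_fiber_mul_sum_erase hi a1
            (fun b1 => ∑ b2, pairMarginal P2 j j' a2 b2 * h b1 b2),
          mul_left_comm, ← mul_assoc]
        simp only [mul_sum, mul_assoc]

theorem sum_fiber_mul_rivalCount (hP1 : IsExchangeable P1) (hP2 : IsExchangeable P2)
    {i i' : Fin M1} (hi : i ≠ i') {j j' : Fin M2} (hj : j ≠ j') (s : X1 → X2 → ℝ)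
    (a1 : X1) (a2 : X2) :
    ∑ c1 ∈ fiber i a1, ∑ c2 ∈ fiber j a2, P1 c1 * P2 c2 * rivalCount s c1 c2 i j a1 a2 =
      (M1 - 1 : ℝ) * (∑ b1 ∈ univ.filter (fun b1 => s a1 a2 ≤ s b1 a2),
          pairMarginal P1 i i' a1 b1) * (∑ b2, pairMarginal P2 j j' a2 b2) +
        (M2 - 1 : ℝ) * (∑ b2 ∈ univ.filter (fun b2 => s a1 a2 ≤ s a1 b2),
          pairMarginal P2 j j' a2 b2) * (∑ b1, pairMarginal P1 i i' a1 b1) +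
        (M1 - 1 : ℝ) * (M2 - 1 : ℝ) * ∑ b1, ∑ b2,
          if s a1 a2 ≤ s b1 b2 then pairMarginal P1 i i' a1 b1 * pairMarginal P2 j j' a2 b2
          else 0 := by
  have hfirst : ∑ c1 ∈ fiber i a1, ∑ c2 ∈ fiber j a2, P1 c1 * P2 c2 *
      (∑ k ∈ univ.erase i, if s a1 a2 ≤ s (c1 k) a2 then 1 else 0) =
      (∑ c1 ∈ fiber i a1, P1 c1 * ∑ k ∈ univ.erase i,
        if s a1 a2 ≤ s (c1 k) a2 then (1 : ℝ) else 0) * ∑ c2 ∈ fiber j a2, P2 c2 := by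
    rw [sum_mul_sum]
    exact sum_congr rfl fun _ _ => sum_congr rfl fun _ _ => by ring
  have hsecond : ∑ c1 ∈ fiber i a1, ∑ c2 ∈ fiber j a2, P1 c1 * P2 c2 *
      (∑ l ∈ univ.erase j, if s a1 a2 ≤ s a1 (c2 l) then 1 else 0) =
      (∑ c2 ∈ fiber j a2, P2 c2 * ∑ l ∈ univ.erase j,
        if s a1 a2 ≤ s a1 (c2 l) then (1 : ℝ) else 0) * ∑ c1 ∈ fiber i a1, P1 c1 := by
    rw [sum_mul_sum, sum_comm]
    exact sum_congr rfl fun _ _ => sum_congr rfl fun _ _ => by ring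
  simp only [rivalCount, mul_add, sum_add_distrib]
  rw [hfirst, hsecond, sum_fiber_mul_sum_erase_sum_erase hP1 hP2 hi hj a1 a2
      (fun b1 b2 => if s a1 a2 ≤ s b1 b2 then 1 else 0),
    hP1.sum_fiber_mul_sum_erase hi a1 (fun b1 => if s a1 a2 ≤ s b1 a2 then 1 else 0),
    hP2.sum_fiber_mul_sum_erase hj a2 (fun b2 => if s a1 a2 ≤ s a1 b2 then 1 else 0),
    sum_fiber_eq_sum_pairMarginal P1 i i', sum_fiber_eq_sum_pairMarginal P2 j j',
    sum_filter, sum_filter]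
  simp only [mul_ite, mul_one, mul_zero]

theorem rcu_bound_likelihood (W : X1 → X2 → Y → ℝ) (hW : ∀ x1 x2 y, 0 ≤ W x1 x2 y)
    (hP1 : IsExchangeable P1) (hP2 : IsExchangeable P2) (hP1_nonneg : ∀ c, 0 ≤ P1 c)
    (hP2_nonneg : ∀ c, 0 ≤ P2 c) {i i' : Fin M1} (hi : i ≠ i') {j j' : Fin M2}
    (hj : j ≠ j') :
    ∑ c1, ∑ c2, P1 c1 * P2 c2 * mlErrorMac W c1 c2 ≤
      ∑ a1, ∑ a2, ∑ y,
        (∑ b1, pairMarginal P1 i i' a1 b1) * (∑ b2, pairMarginal P2 j j' a2 b2) * W a1 a2 y *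
        min 1
          ((M1 - 1 : ℝ) * ((∑ b1 ∈ univ.filter (fun b1 => W a1 a2 y ≤ W b1 a2 y),
              pairMarginal P1 i i' a1 b1) / ∑ b1, pairMarginal P1 i i' a1 b1) +
            (M2 - 1 : ℝ) * ((∑ b2 ∈ univ.filter (fun b2 => W a1 a2 y ≤ W a1 b2 y),
              pairMarginal P2 j j' a2 b2) / ∑ b2, pairMarginal P2 j j' a2 b2) +
            (M1 - 1 : ℝ) * (M2 - 1 : ℝ) * ((∑ b1, ∑ b2, if W a1 a2 y ≤ W b1 b2 y then
              pairMarginal P1 i i' a1 b1 * pairMarginal P2 j j' a2 b2 else 0) /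
              ((∑ b1, pairMarginal P1 i i' a1 b1) * ∑ b2, pairMarginal P2 j j' a2 b2))) := by
  have hP12 : ∀ c1 c2, 0 ≤ P1 c1 * P2 c2 := fun c1 c2 =>
    mul_nonneg (hP1_nonneg c1) (hP2_nonneg c2)
  calc _ = ∑ c1, ∑ c2, P1 c1 * P2 c2 * mlErrorAt W c1 c2 (i, j) :=
        sum_mul_mlErrorMac_eq hP1 hP2 W (i, j)
    _ ≤ ∑ c1, ∑ c2, P1 c1 * P2 c2 * ∑ y, W (c1 i) (c2 j) y *
          min 1 (rivalCount (W · · y) c1 c2 i j (c1 i) (c2 j)) :=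
        sum_le_sum fun c1 _ => sum_le_sum fun c2 _ =>
          mul_le_mul_of_nonneg_left (mlErrorAt_le W hW c1 c2 i j) (hP12 c1 c2)
    _ = ∑ a1, ∑ a2, ∑ y, W a1 a2 y * ∑ c1 ∈ fiber i a1, ∑ c2 ∈ fiber j a2,
          P1 c1 * P2 c2 * min 1 (rivalCount (W · · y) c1 c2 i j a1 a2) := by
        rw [sum_sum_eq_sum_sum_fiberwise (· i) (· j) fun c1 c2 a1 a2 =>
          P1 c1 * P2 c2 * ∑ y, W a1 a2 y * min 1 (rivalCount (W · · y) c1 c2 i j a1 a2)]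
        refine sum_congr rfl fun a1 _ => sum_congr rfl fun a2 _ => ?_
        simp only [mul_sum]
        refine (sum_congr rfl fun _ _ => sum_comm).trans (sum_comm.trans ?_)
        exact sum_congr rfl fun _ _ => sum_congr rfl fun _ _ => sum_congr rfl fun _ _ => by ring
    _ ≤ ∑ a1, ∑ a2, ∑ y, W a1 a2 y *
          min (∑ c1 ∈ fiber i a1, ∑ c2 ∈ fiber j a2, P1 c1 * P2 c2)
            (∑ c1 ∈ fiber i a1, ∑ c2 ∈ fiber j a2,
              P1 c1 * P2 c2 * rivalCount (W · · y) c1 c2 i j a1 a2) :=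
        sum_le_sum fun a1 _ => sum_le_sum fun a2 _ => sum_le_sum fun y _ =>
          mul_le_mul_of_nonneg_left (sum_sum_mul_min_one_le _ _ _ _ hP12) (hW a1 a2 y)
    _ ≤ _ := sum_le_sum fun a1 _ => sum_le_sum fun a2 _ => sum_le_sum fun y _ => by
        rw [← sum_mul_sum, sum_fiber_eq_sum_pairMarginal P1 i i',
          sum_fiber_eq_sum_pairMarginal P2 j j', sum_fiber_mul_rivalCount hP1 hP2 hi hj]
        exact mul_min_le_mul_min_one_div (hW a1 a2 y)
          (sum_nonneg fun b _ => pairMarginal_nonneg hP1_nonneg i i' a1 b)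
          (sum_nonneg fun b _ => pairMarginal_nonneg hP2_nonneg j j' a2 b)

end Ensemble

/-- **Two-user RCU bound for exchangeable (possibly dependent) codebooks.**
With `M₁`, `M₂` codewords drawn independently across the two transmitters from
exchangeable distributions, the ensemble-average ML error probability `ε`
satisfies `ε ≤ E[min{1, V₁+V₂+V₁₂}]`, where the conditional probabilities use
the conditional information densities and the joint law of the first two
codewords of each transmitter. -/
theorem rcu_bound_two_user_mac
    {X1 X2 Y : Type*} [Fintype X1] [Fintype X2] [Fintype Y]
    (M1 M2 : ℕ) (hM1 : 2 ≤ M1) (hM2 : 2 ≤ M2)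
    (W : X1 → X2 → Y → ℝ) (hW0 : ∀ x1 x2 y, 0 ≤ W x1 x2 y)
    (P1cb : (Fin M1 → X1) → ℝ) (hP1cb0 : ∀ c, 0 ≤ P1cb c)
    (P2cb : (Fin M2 → X2) → ℝ) (hP2cb0 : ∀ c, 0 ≤ P2cb c)
    (hexch1 : ∀ (k : ℕ) (σ τ : Fin k → Fin M1),
      Function.Injective σ → Function.Injective τ → ∀ v : Fin k → X1,
        (∑ c ∈ Finset.univ.filter (fun c : Fin M1 → X1 => ∀ i, c (σ i) = v i), P1cb c) =
        (∑ c ∈ Finset.univ.filter (fun c : Fin M1 → X1 => ∀ i, c (τ i) = v i), P1cb c))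
    (hexch2 : ∀ (k : ℕ) (σ τ : Fin k → Fin M2),
      Function.Injective σ → Function.Injective τ → ∀ v : Fin k → X2,
        (∑ c ∈ Finset.univ.filter (fun c : Fin M2 → X2 => ∀ i, c (σ i) = v i), P2cb c) =
        (∑ c ∈ Finset.univ.filter (fun c : Fin M2 → X2 => ∀ i, c (τ i) = v i), P2cb c))
    (P1two : X1 → X1 → ℝ)
    (hP1two : ∀ a b, P1two a b =
      ∑ c ∈ Finset.univ.filter
        (fun c : Fin M1 → X1 => c ⟨0, by omega⟩ = a ∧ c ⟨1, by omega⟩ = b), P1cb c)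
    (P2two : X2 → X2 → ℝ)
    (hP2two : ∀ a b, P2two a b =
      ∑ c ∈ Finset.univ.filter
        (fun c : Fin M2 → X2 => c ⟨0, by omega⟩ = a ∧ c ⟨1, by omega⟩ = b), P2cb c)
    (Pm1 : X1 → ℝ) (hPm1 : ∀ a, Pm1 a = ∑ b, P1two a b)
    (Pm2 : X2 → ℝ) (hPm2 : ∀ a, Pm2 a = ∑ b, P2two a b)
    (Wc2 : X2 → Y → ℝ) (hWc2 : ∀ x2 y, Wc2 x2 y = ∑ x1, Pm1 x1 * W x1 x2 y)
    (Wc1 : X1 → Y → ℝ) (hWc1 : ∀ x1 y, Wc1 x1 y = ∑ x2, Pm2 x2 * W x1 x2 y)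
    (PY : Y → ℝ) (hPY : ∀ y, PY y = ∑ x1, ∑ x2, Pm1 x1 * Pm2 x2 * W x1 x2 y)
    (i1c : X1 → X2 → Y → ℝ)
    (hi1c : ∀ x1 x2 y, i1c x1 x2 y = Real.log (W x1 x2 y / Wc2 x2 y))
    (i2c : X1 → X2 → Y → ℝ)
    (hi2c : ∀ x1 x2 y, i2c x1 x2 y = Real.log (W x1 x2 y / Wc1 x1 y))
    (i12 : X1 → X2 → Y → ℝ)
    (hi12 : ∀ x1 x2 y, i12 x1 x2 y = Real.log (W x1 x2 y / PY y))
    (ε : ℝ)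
    (hε : ε = ∑ c1, ∑ c2, P1cb c1 * P2cb c2 * mlErrorMac W c1 c2) :
    ε ≤ ∑ a1, ∑ a2, ∑ y, Pm1 a1 * Pm2 a2 * W a1 a2 y *
      min 1
        ((M1 - 1 : ℝ) *
            ((∑ b1 ∈ Finset.univ.filter
                (fun b1 : X1 => i1c a1 a2 y ≤ i1c b1 a2 y), P1two a1 b1) / Pm1 a1)
          + (M2 - 1 : ℝ) *
            ((∑ b2 ∈ Finset.univ.filter
                (fun b2 : X2 => i2c a1 a2 y ≤ i2c a1 b2 y), P2two a2 b2) / Pm2 a2)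
          + (M1 - 1 : ℝ) * (M2 - 1 : ℝ) *
            ((∑ b1, ∑ b2,
                (if i12 a1 a2 y ≤ i12 b1 b2 y then P1two a1 b1 * P2two a2 b2 else 0)) /
              (Pm1 a1 * Pm2 a2))) := by
  obtain rfl : P1two = pairMarginal P1cb ⟨0, by omega⟩ ⟨1, by omega⟩ := funext₂ hP1two
  obtain rfl : P2two = pairMarginal P2cb ⟨0, by omega⟩ ⟨1, by omega⟩ := funext₂ hP2two
  have hQ1 := pairMarginal_nonneg hP1cb0 ⟨0, by omega⟩ ⟨1, by omega⟩
  have hQ2 := pairMarginal_nonneg hP2cb0 ⟨0, by omega⟩ ⟨1, by omega⟩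
  have hPm1_0 : ∀ a, 0 ≤ Pm1 a := fun a => hPm1 a ▸ sum_nonneg fun b _ => hQ1 a b
  have hPm2_0 : ∀ a, 0 ≤ Pm2 a := fun a => hPm2 a ▸ sum_nonneg fun b _ => hQ2 a b
  have hM : ∀ {M : ℕ}, 2 ≤ M → (0 : ℝ) ≤ M - 1 := fun hM =>
    sub_nonneg.mpr (Nat.one_le_cast.mpr (by omega))
  have hA := rcu_bound_likelihood W hW0 hexch1 hexch2 hP1cb0 hP2cb0
    (i := ⟨0, by omega⟩) (i' := ⟨1, by omega⟩) (by simp) (j := ⟨0, by omega⟩)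
    (j' := ⟨1, by omega⟩) (by simp)
  simp only [← hPm1, ← hPm2] at hA
  refine hε ▸ hA.trans (sum_le_sum fun a1 _ => sum_le_sum fun a2 _ => sum_le_sum fun y _ =>
    mul_min_one_le_mul_min_one (hPm1_0 a1) (hPm2_0 a2) (hW0 a1 a2 y) (hM hM1) (hM hM2)
      fun hp1 hp2 hw => ?_)
  have hWc2_pos : 0 < Wc2 a2 y := hWc2 a2 y ▸
    sum_pos' (fun x1 _ => mul_nonneg (hPm1_0 x1) (hW0 ..)) ⟨a1, mem_univ _, mul_pos hp1 hw⟩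
  have hWc1_pos : 0 < Wc1 a1 y := hWc1 a1 y ▸
    sum_pos' (fun x2 _ => mul_nonneg (hPm2_0 x2) (hW0 ..)) ⟨a2, mem_univ _, mul_pos hp2 hw⟩
  have hPY_pos : 0 < PY y := hPY y ▸ sum_pos'
    (fun x1 _ => sum_nonneg fun x2 _ => mul_nonneg (mul_nonneg (hPm1_0 x1) (hPm2_0 x2)) (hW0 ..))
    ⟨a1, mem_univ _, sum_pos' (fun x2 _ => mul_nonneg (mul_nonneg hp1.le (hPm2_0 x2)) (hW0 ..))
      ⟨a2, mem_univ _, mul_pos (mul_pos hp1 hp2) hw⟩⟩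
  simp only [sum_filter, hi1c, hi2c, hi12]
  exact ⟨sum_le_sum fun b1 _ => ite_le_ite_of_imp (hQ1 a1 b1) (log_div_le_log_div hw hWc2_pos),
    sum_le_sum fun b2 _ => ite_le_ite_of_imp (hQ2 a2 b2) (log_div_le_log_div hw hWc1_pos),
    sum_le_sum fun b1 _ => sum_le_sum fun b2 _ => ite_le_ite_of_imp
      (mul_nonneg (hQ1 a1 b1) (hQ2 a2 b2)) (log_div_le_log_div hw hPY_pos)⟩
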